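/- arXiv:1808.04337 — 2 statements merged into one kernel-verified Lean document; each statement's English description precedes it below -/
import Mathlib

section
/- For Polish spaces X, Y with Borel probability measures μ_X, μ_Y and Borel measurable functions f : X → ℝ, g : Y → ℝ, the p-th Wasserstein distance between the pushforward measures equals a coupling infimum: W_p(f_*μ_X, g_*μ_Y) = inf over μ ∈ C(μ_X, μ_Y) of ‖f ∘ π_X − g ∘ π_Y‖_{L^p(μ)}. -/
open MeasureTheory ENNReal

/-- The set of couplings between two measures: probability-type measures on the product
with the prescribed marginals. -/
def Coupling {X Y : Type*} [MeasurableSpace X] [MeasurableSpace Y]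
    (μX : Measure X) (μY : Measure Y) : Set (Measure (X × Y)) :=
  {μ | μ.fst = μX ∧ μ.snd = μY}

/-- The `p`-distortion of a coupling `μ` between two measure networks, namely
`‖ω_X - ω_Y‖_{L^p(μ ⊗ μ)}` (for `p = ∞` this is the essential supremum). -/
noncomputable def dis {X Y : Type*} [MeasurableSpace X] [MeasurableSpace Y]
    (ωX : X × X → ℝ) (ωY : Y × Y → ℝ) (p : ℝ≥0∞) (μ : Measure (X × Y)) : ℝ≥0∞ :=
  eLpNorm (fun q : (X × Y) × (X × Y) => ωX (q.1.1, q.2.1) - ωY (q.1.2, q.2.2)) p (μ.prod μ)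

/-- The network Gromov–Wasserstein distance: half the infimal `p`-distortion over couplings. -/
noncomputable def dN {X Y : Type*} [MeasurableSpace X] [MeasurableSpace Y]
    (ωX : X × X → ℝ) (ωY : Y × Y → ℝ) (p : ℝ≥0∞) (μX : Measure X) (μY : Measure Y) : ℝ≥0∞ :=
  (1 / 2) * ⨅ μ ∈ Coupling μX μY, dis ωX ωY p μ

/-- The `p`-th Wasserstein distance between two Borel measures on `ℝ`, as an infimum of
`L^p` transport costs over couplings. -/
noncomputable def Wp (p : ℝ≥0∞) (α β : Measure ℝ) : ℝ≥0∞ :=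
  ⨅ θ ∈ Coupling α β, eLpNorm (fun q : ℝ × ℝ => q.1 - q.2) p θ

/-
Since every coupling of `μX, μY` pushes forward under `(f, g)` to a coupling of `f_*μX, g_*μY`
with the same cost, the right-hand side dominates `W_p`. Conversely, a coupling `θ` of the
pushforwards lifts: disintegrate `μX` along `f` into the kernel `a ↦ μX( · | f = a)`, likewise
`μY` along `g`, and sample both fibers independently over `θ`. The fiber kernels are concentrated
on `f⁻¹{a}` and `g⁻¹{b}`, so the lift pushes forward to `θ` itself.
-/

open MeasureTheory ProbabilityTheory

section Coupling

variable {α β γ δ : Type*} [MeasurableSpace α] [MeasurableSpace β] [MeasurableSpace γ]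
  [MeasurableSpace δ]

lemma map_prodMap_mem_coupling {μ : Measure (α × γ)} {ν : Measure α} {ρ : Measure γ}
    (hμ : μ ∈ Coupling ν ρ) {f : α → β} {g : γ → δ} (hf : Measurable f) (hg : Measurable g) :
    μ.map (Prod.map f g) ∈ Coupling (ν.map f) (ρ.map g) := by
  have hfg : Measurable (Prod.map f g) := hf.prodMap hg
  constructor
  · rw [Measure.fst, Measure.map_map measurable_fst hfg, Prod.map_fst',
      ← Measure.map_map hf measurable_fst, ← Measure.fst, hμ.1]
  · rw [Measure.snd, Measure.map_map measurable_snd hfg, Prod.map_snd',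
      ← Measure.map_map hg measurable_snd, ← Measure.snd, hμ.2]

lemma MeasureTheory.Measure.fst_parallelComp_comp (θ : Measure (α × γ)) (κ : Kernel α β)
    (η : Kernel γ δ) [IsSFiniteKernel κ] [IsMarkovKernel η] :
    ((κ ∥ₖ η) ∘ₘ θ).fst = κ ∘ₘ θ.fst := by
  ext s hs
  rw [Measure.fst_apply hs, ← Set.prod_univ, Measure.bind_apply (hs.prod .univ) (by fun_prop),
    Measure.fst, Measure.bind_apply hs (by fun_prop), lintegral_map (κ.measurable_coe hs)
      measurable_fst]
  simp_rw [Kernel.parallelComp_apply_prod, measure_univ, mul_one]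

lemma MeasureTheory.Measure.snd_parallelComp_comp (θ : Measure (α × γ)) (κ : Kernel α β)
    (η : Kernel γ δ) [IsMarkovKernel κ] [IsSFiniteKernel η] :
    ((κ ∥ₖ η) ∘ₘ θ).snd = η ∘ₘ θ.snd := by
  ext s hs
  rw [Measure.snd_apply hs, ← Set.univ_prod, Measure.bind_apply (MeasurableSet.univ.prod hs)
      (by fun_prop), Measure.snd, Measure.bind_apply hs (by fun_prop),
    lintegral_map (η.measurable_coe hs) measurable_snd]
  simp_rw [Kernel.parallelComp_apply_prod, measure_univ, one_mul]

lemma parallelComp_comp_mem_coupling {θ : Measure (α × γ)} {ν : Measure α} {ρ : Measure γ}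
    (hθ : θ ∈ Coupling ν ρ) (κ : Kernel α β) (η : Kernel γ δ)
    [IsMarkovKernel κ] [IsMarkovKernel η] :
    (κ ∥ₖ η) ∘ₘ θ ∈ Coupling (κ ∘ₘ ν) (η ∘ₘ ρ) := by
  constructor
  · rw [Measure.fst_parallelComp_comp, hθ.1]
  · rw [Measure.snd_parallelComp_comp, hθ.2]

lemma ProbabilityTheory.Kernel.map_prodMap_parallelComp (κ : Kernel α β) (η : Kernel γ δ)
    [IsSFiniteKernel κ] [IsSFiniteKernel η] {ε ζ : Type*} [MeasurableSpace ε]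
    [MeasurableSpace ζ] {f : β → ε} {g : δ → ζ} (hf : Measurable f) (hg : Measurable g) :
    (κ ∥ₖ η).map (Prod.map f g) = κ.map f ∥ₖ η.map g := by
  rw [← Kernel.deterministic_comp_eq_map (hf.prodMap hg),
    ← Kernel.deterministic_parallelComp_deterministic hf hg,
    Kernel.parallelComp_comp_parallelComp, Kernel.deterministic_comp_eq_map,
    Kernel.deterministic_comp_eq_map]

lemma MeasureTheory.Measure.parallelComp_comp_congr {θ : Measure (α × γ)} {κ κ' : Kernel α β}
    {η η' : Kernel γ δ} [IsSFiniteKernel κ] [IsSFiniteKernel κ'] [IsSFiniteKernel η]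
    [IsSFiniteKernel η'] (hκ : κ =ᵐ[θ.fst] κ') (hη : η =ᵐ[θ.snd] η') :
    (κ ∥ₖ η) ∘ₘ θ = (κ' ∥ₖ η') ∘ₘ θ := by
  refine Measure.comp_congr ?_
  filter_upwards [ae_of_ae_map measurable_fst.aemeasurable hκ,
    ae_of_ae_map measurable_snd.aemeasurable hη] with r hκr hηr
  rw [Kernel.parallelComp_apply, Kernel.parallelComp_apply, hκr, hηr]

end Coupling

/-- The conditional distribution of the identity given `f` lives on the fibers of `f`. -/
lemma condDistrib_id_map_ae_eq_id {α β : Type*} [MeasurableSpace α] [StandardBorelSpace α]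
    [Nonempty α] [MeasurableSpace β] [StandardBorelSpace β] {μ : Measure α} [IsFiniteMeasure μ]
    {f : α → β} (hf : Measurable f) :
    (condDistrib id f μ).map f =ᵐ[μ.map f] Kernel.id := by
  have : Nonempty β := .map f ‹_›
  exact (condDistrib_comp f aemeasurable_id hf).symm.trans (condDistrib_self f)

lemma exists_coupling_map_prodMap_eq {X Y β γ : Type*} [MeasurableSpace X]
    [StandardBorelSpace X] [MeasurableSpace Y] [StandardBorelSpace Y] [MeasurableSpace β]
    [StandardBorelSpace β] [MeasurableSpace γ] [StandardBorelSpace γ]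
    (μX : Measure X) (μY : Measure Y) [IsProbabilityMeasure μX] [IsProbabilityMeasure μY]
    {f : X → β} {g : Y → γ} (hf : Measurable f) (hg : Measurable g)
    {θ : Measure (β × γ)} (hθ : θ ∈ Coupling (μX.map f) (μY.map g)) :
    ∃ μ ∈ Coupling μX μY, μ.map (Prod.map f g) = θ := by
  have := nonempty_of_isProbabilityMeasure μX
  have := nonempty_of_isProbabilityMeasure μY
  set κ := condDistrib id f μX
  set η := condDistrib id g μY
  refine ⟨(κ ∥ₖ η) ∘ₘ θ, ?_, ?_⟩
  · have hlift := parallelComp_comp_mem_coupling hθ κ η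
    rwa [condDistrib_comp_map hf.aemeasurable aemeasurable_id,
      condDistrib_comp_map hg.aemeasurable aemeasurable_id, Measure.map_id,
      Measure.map_id] at hlift
  · rw [Measure.map_comp _ _ (hf.prodMap hg), Kernel.map_prodMap_parallelComp _ _ hf hg,
      Measure.parallelComp_comp_congr (κ' := Kernel.id) (η' := Kernel.id),
      Kernel.id_parallelComp_id, Measure.id_comp]
    · rw [hθ.1]; exact condDistrib_id_map_ae_eq_id hf
    · rw [hθ.2]; exact condDistrib_id_map_ae_eq_id hg

theorem Wp_map_eq_iInf_coupling_general
    {X Y : Type*} [TopologicalSpace X] [PolishSpace X] [MeasurableSpace X] [BorelSpace X]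
    [TopologicalSpace Y] [PolishSpace Y] [MeasurableSpace Y] [BorelSpace Y]
    (μX : Measure X) (μY : Measure Y) [IsProbabilityMeasure μX] [IsProbabilityMeasure μY]
    (f : X → ℝ) (g : Y → ℝ) (hf : Measurable f) (hg : Measurable g)
    (p : ℝ≥0∞) :
    Wp p (μX.map f) (μY.map g)
      = ⨅ μ ∈ Coupling μX μY, eLpNorm (fun q : X × Y => f q.1 - g q.2) p μ := by
  have cost_map (μ : Measure (X × Y)) :
      eLpNorm (fun r : ℝ × ℝ => r.1 - r.2) p (μ.map (Prod.map f g))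
        = eLpNorm (fun q : X × Y => f q.1 - g q.2) p μ :=
    eLpNorm_map_measure (by fun_prop) (hf.prodMap hg).aemeasurable
  apply le_antisymm
  · refine le_iInf₂ fun μ hμ => ?_
    exact iInf₂_le_of_le _ (map_prodMap_mem_coupling hμ hf hg) (cost_map μ).le
  · refine le_iInf₂ fun θ hθ => ?_
    obtain ⟨μ, hμ, rfl⟩ := exists_coupling_map_prodMap_eq μX μY hf hg hθ
    exact iInf₂_le_of_le μ hμ (cost_map μ).ge

/-- **Wasserstein distance of pushforwards as a coupling infimum**: for Polish spaces with
Borel probability measures and Borel measurable `f : X → ℝ`, `g : Y → ℝ`,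
`W_p(f_*μX, g_*μY) = inf over couplings μ of ‖f ∘ π_X − g ∘ π_Y‖_{L^p(μ)}`. -/
theorem Wp_map_eq_iInf_coupling
    {X Y : Type*} [TopologicalSpace X] [PolishSpace X] [MeasurableSpace X] [BorelSpace X]
    [TopologicalSpace Y] [PolishSpace Y] [MeasurableSpace Y] [BorelSpace Y]
    (μX : Measure X) (μY : Measure Y) [IsProbabilityMeasure μX] [IsProbabilityMeasure μY]
    (f : X → ℝ) (g : Y → ℝ) (hf : Measurable f) (hg : Measurable g)
    (p : ℝ≥0∞) (hp : 1 ≤ p) :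
    Wp p (μX.map f) (μY.map g)
      = ⨅ μ ∈ Coupling μX μY, eLpNorm (fun q : X × Y => f q.1 - g q.2) p μ :=
  Wp_map_eq_iInf_coupling_general μX μY f g hf hg p
end

section
/- The Third Lower Bound: for measure networks X, Y and p ∈ [1,∞], twice the network Gromov–Wasserstein distance satisfies 2 d_{N,p}(X,Y) ≥ inf over μ ∈ C(μ_X,μ_Y) of ‖ecc^out_{p,X,Y}‖_{L^p(μ)}, where ecc^out_{p,X,Y}(s,t) = inf over ν ∈ C(μ_X,μ_Y) of ‖ω_X(s,·) − ω_Y(t,·)‖_{L^p(ν)}. -/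
/-!
Decouple the two copies of the coupling `μ` in the distortion. For `p < ∞`, Tonelli writes
`‖ω_X − ω_Y‖_{L^p(μ ⊗ μ)}` as the `L^p(μ)` norm of `q ↦ ‖ω_X(q.1, ·) − ω_Y(q.2, ·)‖_{L^p(μ)}`; for
`p = ∞` an a.e. bound on `μ ⊗ μ` holds on a.e. section, which gives the same comparison as an
inequality. Since `μ` is itself a coupling, each inner norm dominates `ecc^out` at `q`.
-/

open MeasureTheory ENNReal

/-- The `L^p` norm (with respect to `μ`) of an `ℝ≥0∞`-valued function, covering `p = ∞`
via the essential supremum. -/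
noncomputable def lpNormENN {α : Type*} [MeasurableSpace α] (p : ℝ≥0∞)
    (f : α → ℝ≥0∞) (μ : Measure α) : ℝ≥0∞ :=
  if p = ∞ then essSup f μ else (∫⁻ a, f a ^ p.toReal ∂μ) ^ (1 / p.toReal)

/-- The outgoing joint eccentricity function
`ecc^out_{p,X,Y}(s,t) = inf over couplings ν of ‖ω_X(s,·) − ω_Y(t,·)‖_{L^p(ν)}`. -/
noncomputable def eccOutJoint {X Y : Type*} [MeasurableSpace X] [MeasurableSpace Y]
    (p : ℝ≥0∞) (ωX : X × X → ℝ) (ωY : Y × Y → ℝ) (μX : Measure X) (μY : Measure Y)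
    (s : X) (t : Y) : ℝ≥0∞ :=
  ⨅ ν ∈ Coupling μX μY, eLpNorm (fun q : X × Y => ωX (s, q.1) - ωY (t, q.2)) p ν

section Sections

variable {α β : Type*} [MeasurableSpace α] [MeasurableSpace β]

theorem lpNormENN_eq_eLpNorm {p : ℝ≥0∞} (hp : p ≠ 0) (f : α → ℝ≥0∞) (μ : Measure α) :
    lpNormENN p f μ = eLpNorm f p μ := by
  unfold lpNormENN
  split_ifs with hptop
  · simp [hptop, eLpNorm_exponent_top, eLpNormEssSup]
  · simp [eLpNorm_eq_lintegral_rpow_enorm_toReal hp hptop]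

variable {E : Type*} [NormedAddCommGroup E] {μ : Measure α} {ν : Measure β}

theorem eLpNorm_top_eLpNorm_top_sections_le [SFinite ν] (f : α × β → E) :
    eLpNorm (fun x => eLpNorm (fun y => f (x, y)) ∞ ν) ∞ μ ≤ eLpNorm f ∞ (μ.prod ν) := by
  simp only [eLpNorm_exponent_top, eLpNormEssSup, enorm_eq_self]
  have hf_le : ∀ᵐ z ∂μ.prod ν, ‖f z‖ₑ ≤ essSup (fun z => ‖f z‖ₑ) (μ.prod ν) :=
    ENNReal.ae_le_essSup _
  refine essSup_le_of_ae_le _ ?_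
  filter_upwards [Measure.ae_ae_of_ae_prod hf_le] with x hx
  exact essSup_le_of_ae_le _ hx

theorem eLpNorm_eLpNorm_sections_eq [SFinite ν] {p : ℝ≥0∞} (hp : p ≠ 0) (hptop : p ≠ ∞)
    {f : α × β → E} (hf : AEStronglyMeasurable f (μ.prod ν)) :
    eLpNorm (fun x => eLpNorm (fun y => f (x, y)) p ν) p μ = eLpNorm f p (μ.prod ν) := by
  have hpos : 0 < p.toReal := ENNReal.toReal_pos hp hptop
  simp only [eLpNorm_eq_lintegral_rpow_enorm_toReal hp hptop, enorm_eq_self, one_div,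
    ENNReal.rpow_inv_rpow hpos.ne']
  rw [lintegral_prod _ (hf.enorm.pow_const _)]

theorem eLpNorm_eLpNorm_sections_le [SFinite ν] {p : ℝ≥0∞} (hp : p ≠ 0)
    {f : α × β → E} (hf : AEStronglyMeasurable f (μ.prod ν)) :
    eLpNorm (fun x => eLpNorm (fun y => f (x, y)) p ν) p μ ≤ eLpNorm f p (μ.prod ν) := by
  rcases eq_or_ne p ∞ with rfl | hptop
  · exact eLpNorm_top_eLpNorm_top_sections_le f
  · exact (eLpNorm_eLpNorm_sections_eq hp hptop hf).le

end Sections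

theorem isFiniteMeasure_of_mem_coupling {X Y : Type*} [MeasurableSpace X] [MeasurableSpace Y]
    {μX : Measure X} [IsFiniteMeasure μX] {μY : Measure Y} {μ : Measure (X × Y)}
    (hμ : μ ∈ Coupling μX μY) : IsFiniteMeasure μ :=
  ⟨by rw [← Measure.fst_univ, hμ.1]; exact measure_lt_top _ _⟩

theorem two_mul_dN {X Y : Type*} [MeasurableSpace X] [MeasurableSpace Y]
    (ωX : X × X → ℝ) (ωY : Y × Y → ℝ) (p : ℝ≥0∞) (μX : Measure X) (μY : Measure Y) :
    2 * dN ωX ωY p μX μY = ⨅ μ ∈ Coupling μX μY, dis ωX ωY p μ := by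
  rw [dN, ← mul_assoc, one_div, ENNReal.mul_inv_cancel two_ne_zero ofNat_ne_top, one_mul]

theorem third_lower_bound_general
    {X Y : Type*} [MeasurableSpace X] [MeasurableSpace Y]
    (μX : Measure X) (μY : Measure Y) [IsProbabilityMeasure μX]
    (ωX : X × X → ℝ) (ωY : Y × Y → ℝ)
    (hωX : Measurable ωX) (hωY : Measurable ωY)
    (p : ℝ≥0∞) (hp : 1 ≤ p) :
    (⨅ μ ∈ Coupling μX μY,
        lpNormENN p (fun q : X × Y => eccOutJoint p ωX ωY μX μY q.1 q.2) μ)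
      ≤ 2 * dN ωX ωY p μX μY := by
  have hp0 : p ≠ 0 := (zero_lt_one.trans_le hp).ne'
  rw [two_mul_dN]
  refine iInf₂_mono fun μ hμ => ?_
  have := isFiniteMeasure_of_mem_coupling hμ
  have hω : Measurable fun z : (X × Y) × (X × Y) => ωX (z.1.1, z.2.1) - ωY (z.1.2, z.2.2) := by
    fun_prop
  calc lpNormENN p (fun q : X × Y => eccOutJoint p ωX ωY μX μY q.1 q.2) μ
      = eLpNorm (fun q : X × Y => eccOutJoint p ωX ωY μX μY q.1 q.2) p μ :=
        lpNormENN_eq_eLpNorm hp0 _ _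
    _ ≤ eLpNorm (fun q : X × Y => eLpNorm (fun q' : X × Y =>
          ωX (q.1, q'.1) - ωY (q.2, q'.2)) p μ) p μ :=
        eLpNorm_mono_enorm fun q => iInf₂_le μ hμ
    _ ≤ dis ωX ωY p μ := eLpNorm_eLpNorm_sections_le hp0 (f := fun z : (X × Y) × (X × Y) =>
          ωX (z.1.1, z.2.1) - ωY (z.1.2, z.2.2)) hω.aestronglyMeasurable

/-- **The Third Lower Bound**: for measure networks `X`, `Y` and `p ∈ [1,∞]`,
`2 d_{N,p}(X,Y) ≥ inf over couplings μ of ‖ecc^out_{p,X,Y}‖_{L^p(μ)}`. -/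
theorem third_lower_bound
    {X Y : Type*} [TopologicalSpace X] [PolishSpace X] [MeasurableSpace X] [BorelSpace X]
    [TopologicalSpace Y] [PolishSpace Y] [MeasurableSpace Y] [BorelSpace Y]
    (μX : Measure X) (μY : Measure Y) [IsProbabilityMeasure μX] [IsProbabilityMeasure μY]
    (ωX : X × X → ℝ) (ωY : Y × Y → ℝ)
    (hωX : Measurable ωX) (hωY : Measurable ωY)
    (hbX : ∃ M, ∀ q, |ωX q| ≤ M) (hbY : ∃ M, ∀ q, |ωY q| ≤ M)
    (p : ℝ≥0∞) (hp : 1 ≤ p) :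
    (⨅ μ ∈ Coupling μX μY,
        lpNormENN p (fun q : X × Y => eccOutJoint p ωX ωY μX μY q.1 q.2) μ)
      ≤ 2 * dN ωX ωY p μX μY :=
  third_lower_bound_general μX μY ωX ωY hωX hωY p hp
end
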